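/- Let r₀ > 0, r₁ > 0 and define r(t) = r₀ e^{r₁²/2} · exp(-(erf⁻¹(-t e^{-r₁²/2}√(2/(r₀²π)) + erf(r₁/√2)))²) for t ∈ [0, T_s], where T_s = √(π/2)·r₀·e^{r₁²/2}·erf(r₁/√2). Then r(0) = r₀, r'(0) = r₁, r'(T_s) = 0, and r(T_s) = r₀·e^{r₁²/2}. -/

import Mathlib

open Set

/-- The error function erf(x) = (2/√π) ∫₀ˣ e^{-s²} ds. -/
noncomputable def errorFun (x : ℝ) : ℝ :=
  (2 / Real.sqrt Real.pi) * ∫ s in (0:ℝ)..x, Real.exp (-s ^ 2)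

/-- The inverse error function on (-1,1). -/
noncomputable def errorFunInv : ℝ → ℝ := Function.invFun errorFun

lemma errorFun_hasDerivAt (x : ℝ) :
    HasDerivAt errorFun (2 / Real.sqrt Real.pi * Real.exp (-x ^ 2)) x := by
  have hc : Continuous fun s : ℝ => Real.exp (-s ^ 2) := by continuity
  have h := intervalIntegral.integral_hasDerivAt_right (hc.intervalIntegrable 0 x)
    hc.stronglyMeasurable.stronglyMeasurableAtFilter hc.continuousAt
  exact h.const_mul (2 / Real.sqrt Real.pi)

lemma errorFun_continuous : Continuous errorFun :=
  continuous_iff_continuousAt.2 fun x => (errorFun_hasDerivAt x).differentiableAt.continuousAt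

lemma errorFun_deriv_pos (x : ℝ) : 0 < 2 / Real.sqrt Real.pi * Real.exp (-x ^ 2) := by
  have := Real.pi_pos
  positivity

lemma errorFun_strictMono : StrictMono errorFun :=
  strictMono_of_deriv_pos fun x => by
    rw [(errorFun_hasDerivAt x).deriv]; exact errorFun_deriv_pos x

lemma errorFun_leftInv (x : ℝ) : errorFunInv (errorFun x) = x :=
  Function.leftInverse_invFun errorFun_strictMono.injective x

lemma errorFun_zero : errorFun 0 = 0 := by simp [errorFun]

lemma errorFun_image (x : ℝ) :
    errorFun '' Ioo (x - 1) (x + 1) = Ioo (errorFun (x - 1)) (errorFun (x + 1)) := by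
  refine Subset.antisymm errorFun_strictMono.image_Ioo_subset ?_
  exact intermediate_value_Ioo (by linarith) errorFun_continuous.continuousOn

lemma errorFun_image_mem (x : ℝ) :
    Ioo (errorFun (x - 1)) (errorFun (x + 1)) ∈ nhds (errorFun x) :=
  Ioo_mem_nhds (errorFun_strictMono (by linarith)) (errorFun_strictMono (by linarith))

lemma errorFun_eventually (x : ℝ) :
    ∀ᶠ y in nhds (errorFun x), errorFun (errorFunInv y) = y := by
  filter_upwards [errorFun_image_mem x] with y hy
  rw [← errorFun_image x] at hy
  obtain ⟨x', _, rfl⟩ := hy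
  rw [errorFun_leftInv]

lemma errorFunInv_continuousAt (x : ℝ) : ContinuousAt errorFunInv (errorFun x) := by
  apply StrictMonoOn.continuousAt_of_image_mem_nhds
    (s := Ioo (errorFun (x - 1)) (errorFun (x + 1)))
  · intro y1 hy1 y2 hy2 hlt
    rw [← errorFun_image x] at hy1 hy2
    obtain ⟨a, _, rfl⟩ := hy1
    obtain ⟨c, _, rfl⟩ := hy2
    rw [errorFun_leftInv, errorFun_leftInv]
    exact errorFun_strictMono.lt_iff_lt.mp hlt
  · exact errorFun_image_mem x
  · have himg : errorFunInv '' (Ioo (errorFun (x - 1)) (errorFun (x + 1)))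
        = Ioo (x - 1) (x + 1) := by
      rw [← errorFun_image x, image_image]
      simpa [errorFun_leftInv] using image_id (Ioo (x - 1) (x + 1))
    rw [errorFun_leftInv, himg]
    exact Ioo_mem_nhds (by linarith) (by linarith)

lemma errorFunInv_hasDerivAt (x : ℝ) :
    HasDerivAt errorFunInv (2 / Real.sqrt Real.pi * Real.exp (-x ^ 2))⁻¹ (errorFun x) := by
  refine HasDerivAt.of_local_left_inverse (errorFunInv_continuousAt x) ?_
    (errorFun_deriv_pos x).ne' (errorFun_eventually x)
  rw [errorFun_leftInv]
  exact errorFun_hasDerivAt x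

/-- The expanding phase of the circle solution with positive
initial velocity: r(0) = r₀, r'(0) = r₁, r'(T_s) = 0 and r(T_s) = r₀·e^{r₁²/2},
where T_s = √(π/2)·r₀·e^{r₁²/2}·erf(r₁/√2). -/
theorem hmcf_circle_expanding_phase
    (r₀ r₁ : ℝ) (hr₀ : 0 < r₀) (hr₁ : 0 < r₁)
    (Ts : ℝ)
    (hTs : Ts = Real.sqrt (Real.pi / 2) * r₀ * Real.exp (r₁ ^ 2 / 2) *
      errorFun (r₁ / Real.sqrt 2))
    (r : ℝ → ℝ)
    (hr : r = fun t =>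
      r₀ * Real.exp (r₁ ^ 2 / 2) *
        Real.exp (-(errorFunInv
          (-t * Real.exp (-(r₁ ^ 2) / 2) * Real.sqrt (2 / (r₀ ^ 2 * Real.pi)) +
            errorFun (r₁ / Real.sqrt 2))) ^ 2)) :
    r 0 = r₀ ∧ deriv r 0 = r₁ ∧ deriv r Ts = 0 ∧
    r Ts = r₀ * Real.exp (r₁ ^ 2 / 2) := by
  have hpi : (0:ℝ) < Real.pi := Real.pi_pos
  have hsπ : (0:ℝ) < Real.sqrt Real.pi := Real.sqrt_pos.2 hpi
  have hs2 : (0:ℝ) < Real.sqrt 2 := Real.sqrt_pos.2 two_pos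
  set A : ℝ := Real.exp (-(r₁ ^ 2) / 2) with hA
  set B : ℝ := Real.sqrt (2 / (r₀ ^ 2 * Real.pi)) with hBdef
  set b : ℝ := errorFun (r₁ / Real.sqrt 2) with hb
  set u : ℝ → ℝ := fun t => -t * A * B + b with hu
  have hAne : A ≠ 0 := Real.exp_ne_zero _
  have hx2 : (r₁ / Real.sqrt 2) ^ 2 = r₁ ^ 2 / 2 := by
    rw [div_pow, Real.sq_sqrt (by norm_num : (0:ℝ) ≤ 2)]
  have hB : B = Real.sqrt 2 / (r₀ * Real.sqrt Real.pi) := by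
    rw [hBdef, Real.sqrt_div (by norm_num : (0:ℝ) ≤ 2), Real.sqrt_mul (by positivity),
      Real.sqrt_sq hr₀.le]
  have hu0 : u 0 = errorFun (r₁ / Real.sqrt 2) := by simp [hu, hb]
  have hEA : Real.exp (r₁ ^ 2 / 2) * A = 1 := by
    rw [hA, ← Real.exp_add]; ring_nf; exact Real.exp_zero
  have hsπ2 : Real.sqrt (Real.pi / 2) = Real.sqrt Real.pi / Real.sqrt 2 :=
    Real.sqrt_div hpi.le 2
  have huTs : u Ts = errorFun 0 := by
    rw [errorFun_zero, hu]
    show -Ts * A * B + b = 0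
    rw [hTs, hsπ2, hB]
    field_simp
    ring_nf
    rw [mul_comm (Real.exp (r₁ ^ 2 / 2)) A] at hEA
    have h1 : A * Real.exp (r₁ ^ 2 * (1/2)) = 1 := by
      rw [show r₁ ^ 2 * (1/2) = r₁ ^ 2 / 2 by ring]; exact hEA
    linear_combination (-b) * h1
  -- derivative of u
  have hud : ∀ t : ℝ, HasDerivAt u (-1 * A * B) t := fun t =>
    (((hasDerivAt_id t).neg.mul_const A).mul_const B).add_const b
  -- general derivative of r
  have key : ∀ (t x : ℝ), u t = errorFun x →
      HasDerivAt r (r₀ * Real.exp (r₁ ^ 2 / 2) *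
        (Real.exp (-x ^ 2) *
          -(2 * x * ((2 / Real.sqrt Real.pi * Real.exp (-x ^ 2))⁻¹ * (-1 * A * B))))) t := by
    intro t x hx
    have hinv : HasDerivAt errorFunInv (2 / Real.sqrt Real.pi * Real.exp (-x ^ 2))⁻¹ (u t) := by
      rw [hx]; exact errorFunInv_hasDerivAt x
    have hG : HasDerivAt (fun s => errorFunInv (u s))
        ((2 / Real.sqrt Real.pi * Real.exp (-x ^ 2))⁻¹ * (-1 * A * B)) t :=
      hinv.comp t (hud t)
    have hGval : errorFunInv (u t) = x := by rw [hx, errorFun_leftInv]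
    have h2 := (((hG.pow 2).neg).exp).const_mul (r₀ * Real.exp (r₁ ^ 2 / 2))
    rw [hGval] at h2
    rw [hr]
    refine h2.congr_deriv ?_
    simp only [Pi.neg_apply, Pi.pow_apply, hGval]
    norm_num
  have hr0 : r 0 = r₀ := by
    rw [hr]
    show r₀ * Real.exp (r₁ ^ 2 / 2) * Real.exp (-(errorFunInv (u 0)) ^ 2) = r₀
    rw [hu0, errorFun_leftInv, hx2]
    rw [mul_assoc, ← Real.exp_add]
    simp
  have hrTs : r Ts = r₀ * Real.exp (r₁ ^ 2 / 2) := by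
    rw [hr]
    show r₀ * Real.exp (r₁ ^ 2 / 2) * Real.exp (-(errorFunInv (u Ts)) ^ 2)
      = r₀ * Real.exp (r₁ ^ 2 / 2)
    rw [huTs, errorFun_leftInv]
    norm_num
  have hdTs : deriv r Ts = 0 := by
    rw [(key Ts 0 huTs).deriv]
    norm_num
  have hd0 : deriv r 0 = r₁ := by
    rw [(key 0 (r₁ / Real.sqrt 2) hu0).deriv]
    have hxneg : -(r₁ / Real.sqrt 2) ^ 2 = -(r₁ ^ 2) / 2 := by rw [hx2]; ring
    rw [hxneg, ← hA, hB]
    have hinv2 : (2 / Real.sqrt Real.pi * A)⁻¹ = Real.sqrt Real.pi / (2 * A) := by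
      field_simp
    rw [hinv2]
    field_simp
    ring_nf
    rw [mul_comm (Real.exp (r₁ ^ 2 / 2)) A] at hEA
    have h1 : A * Real.exp (r₁ ^ 2 * (1/2)) = 1 := by
      rw [show r₁ ^ 2 * (1/2) = r₁ ^ 2 / 2 by ring]; exact hEA
    linear_combination h1
  exact ⟨hr0, hd0, hdTs, hrTs⟩
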